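/- Let M be a matroid with an adjoint map φ to M', and let C ⊆ E(M). Then the map φ_{/C} defined on flats F of M/C by φ_{/C}(F) = φ(F ∪ C) is an adjoint map from M/C to the restriction M'|φ(cl_M(C)). -/

import Mathlib

open Set

namespace Matroid

variable {α β : Type*}

/-- The rank of a set in a matroid, valued in `ℕ∞`. -/
noncomputable def eRk' (M : Matroid α) (X : Set α) : ℕ∞ :=
  ⨆ I ∈ {I | M.Indep I ∧ I ⊆ X}, I.encard

/-- A hyperplane is a flat of rank `r(M) - 1`. -/
def Hyperplane' (M : Matroid α) (H : Set α) : Prop :=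
  M.IsFlat H ∧ M.eRk' H + 1 = M.eRk' M.E

/-- A point is a rank-one flat. -/
def Point' (M : Matroid α) (P : Set α) : Prop :=
  M.IsFlat P ∧ M.eRk' P = 1

/-- A matroid is simple if every subset of the ground set with at most two elements
is independent (no loops and no parallel pairs). -/
def Simple' (M : Matroid α) : Prop :=
  ∀ X ⊆ M.E, X.encard ≤ 2 → M.Indep X

/-- Deletion of a set from a matroid. -/
def delete' (M : Matroid α) (D : Set α) : Matroid α := M ↾ (M.E \ D)

/-- Contraction of a set in a matroid, defined by duality. -/
def contract' (M : Matroid α) (C : Set α) : Matroid α := (M✶.delete' C)✶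

/-- `φ` is an adjoint map from `M` to `M'` : `M'` is simple of the same rank as `M`,
`φ` maps flats of `M` to flats of `M'` injectively, reversing inclusion, and restricts
to a bijection from the hyperplanes of `M` onto the points of `M'`. -/
def IsAdjointMap (M : Matroid α) (M' : Matroid β) (φ : Set α → Set β) : Prop :=
  M'.Simple' ∧ M'.eRk' M'.E = M.eRk' M.E ∧
  (∀ F, M.IsFlat F → M'.IsFlat (φ F)) ∧
  (∀ ⦃F₁ F₂⦄, M.IsFlat F₁ → M.IsFlat F₂ → φ F₁ = φ F₂ → F₁ = F₂) ∧
  (∀ ⦃F₁ F₂⦄, M.IsFlat F₁ → M.IsFlat F₂ → F₁ ⊆ F₂ → φ F₂ ⊆ φ F₁) ∧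
  (∀ H, M.Hyperplane' H → M'.Point' (φ H)) ∧
  (∀ P, M'.Point' P → ∃ H, M.Hyperplane' H ∧ φ H = P)

/-- `IsMinor' N M` means `N` is obtained from `M` by a sequence of deletions and
contractions. -/
inductive IsMinor' : Matroid α → Matroid α → Prop
  | refl (M : Matroid α) : IsMinor' M M
  | delete {M N : Matroid α} (h : IsMinor' N M) (D : Set α) : IsMinor' (N.delete' D) M
  | contract {M N : Matroid α} (h : IsMinor' N M) (C : Set α) : IsMinor' (N.contract' C) M

/-- `M` has an adjoint. -/
def HasAdjoint (M : Matroid α) : Prop :=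
  ∃ (M' : Matroid (Set α)) (φ : Set α → Set (Set α)), IsAdjointMap M M' φ

section AuxAdjoint

variable {M : Matroid α} {M' : Matroid β} {φ : Set α → Set β}
variable {I J X Y C F F' G H A : Set α} {e : α}

lemma closure_flat' (M : Matroid α) (X : Set α) : M.IsFlat (M.closure X) := by
  rw [closure_def, sInter_eq_iInter]
  have : Nonempty {F // F ∈ {F | M.IsFlat F ∧ X ∩ M.E ⊆ F}} :=
    ⟨⟨M.E, M.ground_isFlat, inter_subset_right⟩⟩
  exact IsFlat.iInter fun F ↦ F.2.1

lemma flat_iff_closure_self' : M.IsFlat F ↔ M.closure F = F :=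
  ⟨IsFlat.closure, fun h ↦ h ▸ M.closure_flat' F⟩

lemma le_eRk' (hI : M.Indep I) (hIX : I ⊆ X) : I.encard ≤ M.eRk' X := by
  exact le_biSup _ ⟨hI, hIX⟩

lemma eRk'_le_iff {c : ℕ∞} : M.eRk' X ≤ c ↔ ∀ I, M.Indep I → I ⊆ X → I.encard ≤ c := by
  simp only [eRk', iSup_le_iff, mem_setOf_eq, and_imp]

lemma IsBasis.eRk'_eq (hI : M.IsBasis I X) : M.eRk' X = I.encard := by
  refine le_antisymm (eRk'_le_iff.2 fun J hJ hJX ↦ ?_) (le_eRk' hI.indep hI.subset)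
  obtain ⟨J', hJ', hJJ'⟩ := hJ.subset_isBasis_of_subset hJX hI.subset_ground
  exact (encard_mono hJJ').trans_eq (hJ'.encard_eq_encard hI)

lemma eRk'_mono (h : X ⊆ Y) : M.eRk' X ≤ M.eRk' Y :=
  eRk'_le_iff.2 fun I hI hIX ↦ le_eRk' hI (hIX.trans h)

lemma eRk'_closure_eq (hX : X ⊆ M.E) : M.eRk' (M.closure X) = M.eRk' X := by
  obtain ⟨I, hI⟩ := M.exists_isBasis X
  rw [hI.isBasis_closure_right.eRk'_eq, hI.eRk'_eq]

lemma eRk'_insert_le : M.eRk' (insert e X) ≤ M.eRk' X + 1 := by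
  refine eRk'_le_iff.2 fun I hI hIX ↦ ?_
  have h1 : I.encard ≤ (I \ {e}).encard + 1 :=
    (encard_mono (subset_insert_diff_singleton e I)).trans (encard_insert_le _ _)
  exact h1.trans (add_le_add_left (le_eRk' (hI.subset diff_subset)
    (fun x hx ↦ (hIX hx.1).resolve_left hx.2)) 1)

lemma eRk'_ne_top [M.Finite] : M.eRk' X ≠ ⊤ := by
  refine (eRk'_le_iff.2 fun I hI _ ↦ encard_mono hI.subset_ground).trans_lt ?_ |>.ne
  exact M.ground_finite.encard_lt_top

lemma eRk'_empty (M : Matroid α) : M.eRk' ∅ = 0 := by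
  refine le_antisymm (eRk'_le_iff.2 fun I hI hIX ↦ ?_) zero_le
  rw [subset_empty_iff] at hIX
  simp [hIX]

lemma IsFlat.eRk'_lt (hF : M.IsFlat F) (hF' : M.IsFlat F') (hss : F ⊂ F') :
    M.eRk' F + 1 ≤ M.eRk' F' := by
  obtain ⟨I, hI⟩ := M.exists_isBasis F hF.subset_ground
  obtain ⟨e, heF', heF⟩ := exists_of_ssubset hss
  have heI : e ∉ I := fun h ↦ heF (hI.subset h)
  have hecl : e ∉ M.closure I := by
    rw [hI.closure_eq_closure, hF.closure]; exact heF
  have hins : M.Indep (insert e I) := by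
    rw [hI.indep.insert_indep_iff_of_notMem heI]
    exact ⟨hF'.subset_ground heF', hecl⟩
  calc M.eRk' F + 1 = I.encard + 1 := by rw [hI.eRk'_eq]
    _ = (insert e I).encard := (encard_insert_of_notMem heI).symm
    _ ≤ M.eRk' F' := le_eRk' hins (insert_subset heF' (hI.subset.trans hss.subset))

-- (10)

lemma IsFlat.eq_of_le (hF : M.IsFlat F) (hF' : M.IsFlat F') (hss : F ⊆ F')
    (hle : M.eRk' F' ≤ M.eRk' F) (hfin : M.eRk' F' ≠ ⊤) : F = F' := by
  by_contra hne
  have := hF.eRk'_lt hF' (hss.ssubset_of_ne hne)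
  have h2 : M.eRk' F' + 1 ≤ M.eRk' F' := le_trans (add_le_add_left hle 1) this
  have h3 : M.eRk' F' < M.eRk' F' + 1 := ENat.lt_add_one_iff hfin |>.2 le_rfl
  exact absurd (h3.trans_le h2) (lt_irrefl _)

-- (11) cover between flats

lemma exists_cover (hF : M.IsFlat F) (hF' : M.IsFlat F') (hss : F ⊂ F') :
    ∃ F₀, M.IsFlat F₀ ∧ F ⊆ F₀ ∧ F₀ ⊆ F' ∧ M.eRk' F₀ = M.eRk' F + 1 := by
  obtain ⟨I, hI⟩ := M.exists_isBasis F hF.subset_ground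
  obtain ⟨e, heF', heF⟩ := exists_of_ssubset hss
  have heI : e ∉ I := fun h ↦ heF (hI.subset h)
  have hins : M.Indep (insert e I) := by
    rw [hI.indep.insert_indep_iff_of_notMem heI]
    exact ⟨hF'.subset_ground heF', by rw [hI.closure_eq_closure, hF.closure]; exact heF⟩
  refine ⟨M.closure (insert e I), M.closure_flat' _, ?_, ?_, ?_⟩
  · calc F = M.closure I := by rw [hI.closure_eq_closure, hF.closure]
      _ ⊆ _ := M.closure_subset_closure (subset_insert _ _)
  · rw [← hF'.closure]
    exact M.closure_subset_closure (insert_subset heF' (hI.subset.trans hss.subset))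
  · rw [hins.isBasis_closure.eRk'_eq, encard_insert_of_notMem heI, hI.eRk'_eq]

-- (12) decomposition of a positive-rank flat

lemma exists_decomp (hF : M.IsFlat F) (h1 : 1 ≤ M.eRk' F) :
    ∃ F' i, M.IsFlat F' ∧ F' ⊆ F ∧ i ∈ F ∧ F = M.closure (F' ∪ {i}) ∧
      M.eRk' F' + 1 = M.eRk' F := by
  obtain ⟨I, hI⟩ := M.exists_isBasis F hF.subset_ground
  have hne : I.Nonempty := by
    rw [nonempty_iff_ne_empty]
    rintro rfl
    simp [hI.eRk'_eq] at h1
  obtain ⟨i, hiI⟩ := hne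
  refine ⟨M.closure (I \ {i}), i, M.closure_flat' _, ?_, hI.subset hiI, ?_, ?_⟩
  · rw [← hF.closure, ← hI.closure_eq_closure]
    exact M.closure_subset_closure diff_subset
  · rw [closure_union_closure_left_eq, diff_union_self, union_singleton,
      insert_eq_of_mem hiI, hI.closure_eq_closure, hF.closure]
  · rw [(hI.indep.subset diff_subset).isBasis_closure.eRk'_eq, hI.eRk'_eq,
      encard_diff_singleton_add_one hiI]

lemma chain_ineq [M.Finite] (hφ : IsAdjointMap M M' φ) (n : ℕ) :
    ∀ F G, M.IsFlat F → M.IsFlat G → F ⊆ G → M.eRk' G ≤ M.eRk' F + n →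
    M'.eRk' (φ G) + M.eRk' G ≤ M'.eRk' (φ F) + M.eRk' F := by
  obtain ⟨-, -, hflat, hinj, hrev, -, -⟩ := hφ
  induction n with
  | zero =>
    intro F G hF hG hss hle
    rw [hF.eq_of_le hG hss (by simpa using hle) eRk'_ne_top]
  | succ n ih =>
    intro F G hF hG hss hle
    rcases eq_or_ssubset_of_subset hss with rfl | hss'
    · rfl
    obtain ⟨F₀, hF₀, hFF₀, hF₀G, hrk⟩ := exists_cover hF hG hss'
    have hne : F ≠ F₀ := by
      rintro rfl
      exact ((ENat.lt_add_one_iff eRk'_ne_top).2 le_rfl).ne hrk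
    have hstep : M'.eRk' (φ F₀) + 1 ≤ M'.eRk' (φ F) :=
      (hflat _ hF₀).eRk'_lt (hflat _ hF)
        ((hrev hF hF₀ hFF₀).ssubset_of_ne (fun h ↦ hne (hinj hF hF₀ h.symm)))
    have hIH := ih F₀ G hF₀ hG hF₀G (by
      rw [hrk]
      calc M.eRk' G ≤ M.eRk' F + (n + 1 : ℕ) := hle
        _ = M.eRk' F + 1 + n := by push_cast; ring)
    calc M'.eRk' (φ G) + M.eRk' G ≤ M'.eRk' (φ F₀) + M.eRk' F₀ := hIH
      _ = M'.eRk' (φ F₀) + 1 + M.eRk' F := by rw [hrk]; ring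
      _ ≤ M'.eRk' (φ F) + M.eRk' F := add_le_add_left hstep _

lemma adjoint_eRk'_add [M.Finite] (hφ : IsAdjointMap M M' φ) (hF : M.IsFlat F) :
    M'.eRk' (φ F) + M.eRk' F = M.eRk' M.E := by
  set n := (M.eRk' M.E).toNat with hn'
  have hn : (n : ℕ∞) = M.eRk' M.E := ENat.coe_toNat (eRk'_ne_top (M := M) (X := M.E))
  have hcl0 : M.eRk' (M.closure ∅) = 0 := by
    rw [eRk'_closure_eq (empty_subset _), eRk'_empty]
  have hclF : M.closure ∅ ⊆ F := by
    rw [← hF.closure]; exact M.closure_subset_closure (empty_subset _)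
  refine le_antisymm ?_ ?_
  · have := chain_ineq hφ n (M.closure ∅) F (M.closure_flat' _) hF hclF
      (by rw [hcl0, zero_add]; exact le_trans (eRk'_mono hF.subset_ground) hn.ge)
    rw [hcl0, add_zero] at this
    refine this.trans ?_
    rw [← hφ.2.1]
    exact eRk'_mono (hφ.2.2.1 _ (M.closure_flat' _)).subset_ground
  · have := chain_ineq hφ n F M.E hF M.ground_isFlat hF.subset_ground
      (by rw [← hn]; exact le_add_self)
    exact le_trans le_add_self this

lemma adjoint_flat_rank_le [M.Finite] (hφ : IsAdjointMap M M' φ) {D : Set β}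
    (hD : M'.IsFlat D) : M'.eRk' D ≠ ⊤ := by
  have h1 : M'.eRk' D ≤ M.eRk' M.E := by
    rw [← hφ.2.1]; exact eRk'_mono hD.subset_ground
  exact fun h ↦ eRk'_ne_top (M := M) (X := M.E) (top_le_iff.mp (h ▸ h1))

lemma forcing [M.Finite] (hφ : IsAdjointMap M M' φ) {P : Set β} {T₁ T₂ : Set α}
    (h1 : M.IsFlat T₁) (h2 : M.IsFlat T₂) (hne : T₁ ≠ T₂)
    (hr1 : M.eRk' T₁ + 1 = M.eRk' (M.closure (T₁ ∪ T₂)))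
    (hr2 : M.eRk' T₂ + 1 = M.eRk' (M.closure (T₁ ∪ T₂)))
    (hP : M'.Point' P) (hPS1 : P ⊆ φ T₁) (hPS2 : P ⊆ φ T₂) :
    P ⊆ φ (M.closure (T₁ ∪ T₂)) := by
  obtain ⟨-, -, hflat, hinj, hrev, -, -⟩ := id hφ
  by_contra hPS
  set S := M.closure (T₁ ∪ T₂) with hS
  have hSflat : M.IsFlat S := M.closure_flat' _
  have hsub : T₁ ∪ T₂ ⊆ M.E := union_subset h1.subset_ground h2.subset_ground
  set D := M'.closure (φ S ∪ P) with hD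
  have hDflat : M'.IsFlat D := M'.closure_flat' _
  have hφSD : φ S ⊆ D := subset_union_left.trans (M'.subset_closure _
    (union_subset (hflat _ hSflat).subset_ground hP.1.subset_ground))
  have hPD : P ⊆ D := subset_union_right.trans (M'.subset_closure _
    (union_subset (hflat _ hSflat).subset_ground hP.1.subset_ground))
  have hssD : φ S ⊂ D := by
    refine hφSD.ssubset_of_ne fun h ↦ hPS ?_
    rw [hS, h]; exact hPD
  have hrD : M'.eRk' (φ S) + 1 ≤ M'.eRk' D := (hflat _ hSflat).eRk'_lt hDflat hssD
  have gen : ∀ T, M.IsFlat T → T ⊆ S → P ⊆ φ T → M.eRk' T + 1 = M.eRk' S → D = φ T := by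
    intro T hT hTS hPT hrr
    have hDT : D ⊆ φ T := by
      have : φ S ∪ P ⊆ φ T := union_subset (hrev hT hSflat hTS) hPT
      calc D ⊆ M'.closure (φ T) := M'.closure_subset_closure this
        _ = φ T := (hflat _ hT).closure
    have hrT : M'.eRk' (φ T) ≤ M'.eRk' D := by
      have e1 := adjoint_eRk'_add hφ hT
      have e2 := adjoint_eRk'_add hφ hSflat
      have e2' : M'.eRk' (φ S) + 1 + M.eRk' T = M.eRk' M.E := by
        rw [add_assoc, add_comm (1 : ℕ∞) (M.eRk' T), hrr]; exact e2
      have e4 : M'.eRk' (φ T) = M'.eRk' (φ S) + 1 :=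
        WithTop.add_right_cancel (eRk'_ne_top (M := M) (X := T)) (e1.trans e2'.symm)
      rw [e4]; exact hrD
    exact (hDflat.eq_of_le (hflat _ hT) hDT hrT (adjoint_flat_rank_le hφ (hflat _ hT)))
  have hT1S : T₁ ⊆ S := subset_union_left.trans (M.subset_closure _ hsub)
  have hT2S : T₂ ⊆ S := subset_union_right.trans (M.subset_closure _ hsub)
  exact hne (hinj h1 h2 (((gen T₁ h1 hT1S hPS1 hr1).symm.trans (gen T₂ h2 hT2S hPS2 hr2))))

lemma flat_rank_zero {A : Set α} (hA : M.IsFlat A) (h0 : M.eRk' A = 0) : A = M.closure ∅ := by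
  obtain ⟨I, hI⟩ := M.exists_isBasis A hA.subset_ground
  have hI0 : I = ∅ := by rw [← encard_eq_zero, ← hI.eRk'_eq]; exact h0
  rw [← hA.closure, ← hI.closure_eq_closure, hI0]

lemma reflection [M.Finite] (hφ : IsAdjointMap M M' φ) (hF : M.IsFlat F) (hH : M.Hyperplane' H)
    (hsub : φ H ⊆ φ F) : F ⊆ H := by
  obtain ⟨-, -, hflat, hinj, hrev, hhp, -⟩ := id hφ
  have hP : M'.Point' (φ H) := hhp H hH
  have claim : ∀ n : ℕ, ∀ A B, M.IsFlat A → M.IsFlat B → A ⊆ F → B ⊆ H →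
      M.eRk' A + M.eRk' B ≤ (n : ℕ∞) → φ H ⊆ φ (M.closure (A ∪ B)) := by
    intro n
    induction n with
    | zero =>
      intro A B hA hB hAF hBH hle
      have hA0 : M.eRk' A = 0 := by
        have := le_trans (le_add_right le_rfl) hle; simpa using this
      rw [flat_rank_zero hA hA0, closure_union_closure_left_eq, empty_union, hB.closure]
      exact hrev hB hH.1 hBH
    | succ n ih =>
      intro A B hA hB hAF hBH hle
      by_cases hA0 : M.eRk' A = 0
      · rw [flat_rank_zero hA hA0, closure_union_closure_left_eq, empty_union, hB.closure]
        exact hrev hB hH.1 hBH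
      by_cases hB0 : M.eRk' B = 0
      · rw [flat_rank_zero hB hB0, closure_union_closure_right_eq, union_empty, hA.closure]
        exact hsub.trans (hrev hA hF hAF)
      obtain ⟨A', i, hA', hA'A, hiA, hAeq, hrA⟩ := exists_decomp hA (ENat.one_le_iff_ne_zero.2 hA0)
      obtain ⟨B', j, hB', hB'B, hjB, hBeq, hrB⟩ := exists_decomp hB (ENat.one_le_iff_ne_zero.2 hB0)
      set S := M.closure (A ∪ B) with hS
      set S₁ := M.closure (A' ∪ B) with hS1
      set S₂ := M.closure (A ∪ B') with hS2
      have hSf : M.IsFlat S := M.closure_flat' _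
      have hS1f : M.IsFlat S₁ := M.closure_flat' _
      have hS2f : M.IsFlat S₂ := M.closure_flat' _
      have hgr : A ∪ B ⊆ M.E := union_subset hA.subset_ground hB.subset_ground
      have hgr1 : A' ∪ B ⊆ M.E := union_subset hA'.subset_ground hB.subset_ground
      have hgr2 : A ∪ B' ⊆ M.E := union_subset hA.subset_ground hB'.subset_ground
      have hiE : i ∈ M.E := hA.subset_ground hiA
      have hjE : j ∈ M.E := hB.subset_ground hjB
      have h1 : φ H ⊆ φ S₁ := by
        refine ih A' B hA' hB (hA'A.trans hAF) hBH ?_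
        have h' : (M.eRk' A' + M.eRk' B) + 1 ≤ (n : ℕ∞) + 1 := by
          calc (M.eRk' A' + M.eRk' B) + 1 = (M.eRk' A' + 1) + M.eRk' B := by ring
            _ = M.eRk' A + M.eRk' B := by rw [hrA]
            _ ≤ ((n + 1 : ℕ) : ℕ∞) := hle
            _ = (n : ℕ∞) + 1 := by push_cast; ring
        exact (ENat.add_le_add_iff_right (by simp)).mp h'
      have h2 : φ H ⊆ φ S₂ := by
        refine ih A B' hA hB' hAF (hB'B.trans hBH) ?_
        have h' : (M.eRk' A + M.eRk' B') + 1 ≤ (n : ℕ∞) + 1 := by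
          calc (M.eRk' A + M.eRk' B') + 1 = M.eRk' A + (M.eRk' B' + 1) := by ring
            _ = M.eRk' A + M.eRk' B := by rw [hrB]
            _ ≤ ((n + 1 : ℕ) : ℕ∞) := hle
            _ = (n : ℕ∞) + 1 := by push_cast; ring
        exact (ENat.add_le_add_iff_right (by simp)).mp h'
      have hSS1 : S = M.closure (S₁ ∪ {i}) := by
        rw [hS, hS1, closure_union_closure_left_eq, hAeq, closure_union_closure_left_eq]
        exact congrArg M.closure (union_right_comm _ _ _)
      have hSS2 : S = M.closure (S₂ ∪ {j}) := by
        rw [hS, hS2, closure_union_closure_left_eq, hBeq, closure_union_closure_right_eq]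
        exact congrArg M.closure (union_assoc _ _ _).symm
      rcases eq_or_ne S₁ S with hq | hne1
      · exact hq ▸ h1
      rcases eq_or_ne S₂ S with hq | hne2
      · exact hq ▸ h2
      have hS1S : S₁ ⊆ S := closure_subset_closure _ (union_subset_union_left _ hA'A)
      have hS2S : S₂ ⊆ S := closure_subset_closure _ (union_subset_union_right _ hB'B)
      have hr1 : M.eRk' S₁ + 1 = M.eRk' S := by
        refine le_antisymm (hS1f.eRk'_lt hSf (hS1S.ssubset_of_ne hne1)) ?_
        calc M.eRk' S = M.eRk' (S₁ ∪ {i}) := by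
              rw [hSS1, eRk'_closure_eq (union_subset hS1f.subset_ground
                (singleton_subset_iff.2 hiE))]
          _ = M.eRk' (insert i S₁) := by rw [union_singleton]
          _ ≤ M.eRk' S₁ + 1 := eRk'_insert_le
      have hr2 : M.eRk' S₂ + 1 = M.eRk' S := by
        refine le_antisymm (hS2f.eRk'_lt hSf (hS2S.ssubset_of_ne hne2)) ?_
        calc M.eRk' S = M.eRk' (S₂ ∪ {j}) := by
              rw [hSS2, eRk'_closure_eq (union_subset hS2f.subset_ground
                (singleton_subset_iff.2 hjE))]
          _ = M.eRk' (insert j S₂) := by rw [union_singleton]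
          _ ≤ M.eRk' S₂ + 1 := eRk'_insert_le
      have hneq : S₁ ≠ S₂ := by
        intro h
        have hiS2 : i ∈ S₂ := (M.subset_closure _ hgr2) (Or.inl hiA)
        have hiS1 : i ∈ S₁ := h ▸ hiS2
        have : S = S₁ := by
          rw [hSS1, union_eq_self_of_subset_right (singleton_subset_iff.2 hiS1), hS1f.closure]
        exact hne1 this.symm
      have hA2 : A ⊆ S₂ := subset_union_left.trans (M.subset_closure _ hgr2)
      have hB1 : B ⊆ S₁ := subset_union_right.trans (M.subset_closure _ hgr1)
      have hjoin : S = M.closure (S₁ ∪ S₂) := by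
        refine subset_antisymm ?_ ?_
        · exact closure_subset_closure _
            (union_subset (hA2.trans subset_union_right) (hB1.trans subset_union_left))
        · have := closure_subset_closure M (union_subset hS1S hS2S)
          rwa [hSf.closure] at this
      have hforce := forcing hφ hS1f hS2f hneq (by rw [← hjoin]; exact hr1)
        (by rw [← hjoin]; exact hr2) hP h1 h2
      rw [← hjoin] at hforce
      exact hforce
  have hn : (((M.eRk' F + M.eRk' H).toNat : ℕ) : ℕ∞) = M.eRk' F + M.eRk' H :=
    ENat.coe_toNat (WithTop.add_ne_top.2 ⟨eRk'_ne_top, eRk'_ne_top⟩)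
  have hmain := claim (M.eRk' F + M.eRk' H).toNat F H hF hH.1 Subset.rfl Subset.rfl hn.ge
  by_contra hFH
  have hgrFH : F ∪ H ⊆ M.E := union_subset hF.subset_ground hH.1.subset_ground
  have hHcl : H ⊆ M.closure (F ∪ H) := subset_union_right.trans (M.subset_closure _ hgrFH)
  have hne : H ≠ M.closure (F ∪ H) := by
    intro h
    exact hFH (subset_union_left.trans ((M.subset_closure _ hgrFH).trans h.symm.subset))
  have hEeq : M.closure (F ∪ H) = M.E := by
    refine (M.closure_flat' _).eq_of_le M.ground_isFlat (closure_subset_ground _ _) ?_ eRk'_ne_top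
    rw [← hH.2]
    exact hH.1.eRk'_lt (M.closure_flat' _) (hHcl.ssubset_of_ne hne)
  have h0 : M'.eRk' (φ M.E) = 0 := by
    have h' : M'.eRk' (φ M.E) + M.eRk' M.E = 0 + M.eRk' M.E := by
      rw [adjoint_eRk'_add hφ M.ground_isFlat, zero_add]
    exact WithTop.add_right_cancel eRk'_ne_top h'
  have hφHE : φ H ⊆ φ M.E := hEeq ▸ hmain
  have hcon : (1 : ℕ∞) ≤ 0 := by
    rw [← h0, ← hP.2]
    exact eRk'_mono hφHE
  simp at hcon

lemma encard_ne_top_of_indep [M.Finite] (hI : M.Indep I) : I.encard ≠ ⊤ :=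
  ((M.ground_finite.subset hI.subset_ground).encard_lt_top).ne

@[simp] lemma contract'_ground (M : Matroid α) (C : Set α) : (M.contract' C).E = M.E \ C := rfl

lemma indep_union_basis_transfer [M.Finite] {J J' : Set α} (hJ : M.IsBasis J C)
    (hJ' : M.IsBasis J' C) (hdj : Disjoint I C) (h : M.Indep (I ∪ J')) : M.Indep (I ∪ J) := by
  have hIE : I ⊆ M.E := (h.subset subset_union_left).subset_ground
  have hIC : I ∪ C ⊆ M.E := union_subset hIE hJ.subset_ground
  obtain ⟨T, hT, hJT⟩ := hJ.indep.subset_isBasis_of_subset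
    (hJ.subset.trans subset_union_right) hIC
  have hTC : J = T ∩ C :=
    hJ.eq_of_subset_indep (hT.indep.inter_right C) (subset_inter hJT hJ.subset)
      inter_subset_right
  have hbasis' : M.IsBasis (I ∪ J') (I ∪ C) := by
    refine h.isBasis_of_subset_of_subset_closure (union_subset_union_right _ hJ'.subset) ?_
    exact union_subset ((M.subset_closure I hIE).trans
        (M.closure_subset_closure subset_union_left))
      (hJ'.subset_closure.trans (M.closure_subset_closure subset_union_right))
  have hdisj : Disjoint I J' := hdj.mono_right hJ'.subset
  have h1 : T.encard = I.encard + J.encard := by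
    rw [hT.encard_eq_encard hbasis', encard_union_eq hdisj, hJ'.encard_eq_encard hJ]
  have h2 : (T \ J).encard + J.encard = T.encard := encard_diff_add_encard_of_subset hJT
  have hTJI : T \ J ⊆ I := by
    rintro x ⟨hxT, hxJ⟩
    rcases hT.subset hxT with h' | h'
    · exact h'
    · exact absurd (hTC ▸ (⟨hxT, h'⟩ : x ∈ T ∩ C)) hxJ
  have hIcard : (T \ J).encard = I.encard := by
    refine WithTop.add_right_cancel (encard_ne_top_of_indep (hJ.indep)) ?_
    exact h2.trans h1
  have hTJ : T \ J = I :=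
    (M.ground_finite.subset hIE).eq_of_subset_of_encard_le' hTJI hIcard.ge
  have hfin : I ∪ J = T := by rw [← hTJ]; exact diff_union_of_subset hJT
  exact hfin ▸ hT.indep

lemma contract'_indep_iff [M.Finite] (hC : C ⊆ M.E) (hJ : M.IsBasis J C) :
    (M.contract' C).Indep I ↔ I ⊆ M.E \ C ∧ M.Indep (I ∪ J) := by
  have hgd : M.E \ C ⊆ M✶.E := diff_subset
  have hBase : ∀ B, (M✶.delete' C).IsBase B ↔ M✶.IsBasis B (M.E \ C) := fun B ↦ by
    rw [delete', dual_ground, isBase_restrict_iff hgd]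
  constructor
  · intro hI
    rw [contract', dual_indep_iff_exists'] at hI
    obtain ⟨hIE, B', hB', hdj⟩ := hI
    have hIE' : I ⊆ M.E \ C := by
      simpa [delete'] using hIE
    rw [hBase] at hB'
    obtain ⟨B'', hB'', hB'B''⟩ := hB'.indep.exists_isBase_superset
    have hBase'' : M.IsBase (M.E \ B'') := hB''.compl_isBase_of_dual
    have hB'eq : B' = B'' ∩ (M.E \ C) :=
      hB'.eq_of_subset_indep (hB''.indep.subset inter_subset_left)
        (subset_inter hB'B'' hB'.subset) inter_subset_right
    have hIB : I ⊆ M.E \ B'' := by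
      intro x hx
      refine ⟨(hIE' hx).1, fun hxB ↦ ?_⟩
      exact hdj.ne_of_mem hx (hB'eq ▸ ⟨hxB, hIE' hx⟩) rfl
    have hbasisC : M.IsBasis ((M.E \ B'') ∩ C) C := by
      have := (hBase''.inter_isBasis_iff_compl_inter_isBasis_dual hC).2 ?_
      · exact this
      · have heq : M.E \ (M.E \ B'') = B'' := diff_diff_cancel_left hB''.subset_ground
        rw [heq, ← hB'eq]
        exact hB'
    refine ⟨hIE', indep_union_basis_transfer hJ hbasisC (disjoint_sdiff_left.mono_left hIE')
      (hBase''.indep.subset (union_subset hIB inter_subset_left))⟩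
  · rintro ⟨hIE, hind⟩
    obtain ⟨B, hB, hIJB⟩ := hind.exists_isBase_superset
    have hbasisC : M.IsBasis (B ∩ C) C := by
      refine (hB.indep.inter_right C).isBasis_of_subset_of_subset_closure inter_subset_right ?_
      exact hJ.subset_closure.trans (M.closure_subset_closure
        (subset_inter ((subset_union_right).trans hIJB) hJ.subset))
    have hdual := hB.compl_inter_isBasis_of_inter_isBasis hbasisC
    rw [contract', dual_indep_iff_exists']
    refine ⟨by simpa [delete'] using hIE, (M.E \ B) ∩ (M.E \ C), ?_, ?_⟩
    · rw [hBase]; exact hdual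
    · exact Disjoint.mono_right (inter_subset_left) (disjoint_sdiff_right.mono_left
        ((subset_union_left).trans hIJB))

lemma contract'_basis [M.Finite] {K : Set α} (hC : C ⊆ M.E) (hJ : M.IsBasis J C)
    (hX : X ⊆ M.E \ C) (hK : M.IsBasis K (X ∪ C)) (hJK : J ⊆ K) :
    (M.contract' C).IsBasis (K \ J) X := by
  have hKC : J = K ∩ C :=
    hJ.eq_of_subset_indep (hK.indep.inter_right C) (subset_inter hJK hJ.subset)
      inter_subset_right
  have hKJX : K \ J ⊆ X := by
    rintro x ⟨hxK, hxJ⟩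
    rcases hK.subset hxK with h | h
    · exact h
    · exact absurd (hKC ▸ (⟨hxK, h⟩ : x ∈ K ∩ C)) hxJ
  have hKJindep : (M.contract' C).Indep (K \ J) := by
    rw [contract'_indep_iff hC hJ, diff_union_of_subset hJK]
    exact ⟨hKJX.trans hX, hK.indep⟩
  refine hKJindep.isBasis_of_forall_insert hKJX ?_
  rintro e ⟨heX, heI⟩
  rw [dep_iff]
  have heC : e ∉ C := (hX heX).2
  have heK : e ∉ K := fun h ↦ heI ⟨h, fun hJ' ↦ heC (hJ.subset hJ')⟩
  constructor
  · intro hind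
    rw [contract'_indep_iff hC hJ] at hind
    have hey : insert e (K \ J) ∪ J = insert e K := by
      rw [insert_union, diff_union_of_subset hJK]
    have hins : M.Indep (insert e K) := hey ▸ hind.2
    have hecl : e ∈ M.closure K := hK.subset_closure (Or.inl heX)
    exact ((hK.indep.insert_indep_iff_of_notMem heK).1 hins).2 hecl
  · exact insert_subset (hX heX) ((hKJX.trans hX).trans (by rw [contract'_ground]))

lemma contract'_eRk' [M.Finite] (hC : C ⊆ M.E) (hX : X ⊆ M.E \ C) :
    (M.contract' C).eRk' X + M.eRk' C = M.eRk' (X ∪ C) := by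
  obtain ⟨J, hJ⟩ := M.exists_isBasis C hC
  obtain ⟨K, hK, hJK⟩ := hJ.indep.subset_isBasis_of_subset
    (hJ.subset.trans subset_union_right) (union_subset (hX.trans diff_subset) hC)
  rw [(contract'_basis hC hJ hX hK hJK).eRk'_eq, hJ.eRk'_eq, hK.eRk'_eq,
    ← encard_diff_add_encard_of_subset hJK]

lemma contract'_closure [M.Finite] (hC : C ⊆ M.E) (hX : X ⊆ M.E \ C) :
    (M.contract' C).closure X = M.closure (X ∪ C) \ C := by
  obtain ⟨J, hJ⟩ := M.exists_isBasis C hC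
  obtain ⟨K, hK, hJK⟩ := hJ.indep.subset_isBasis_of_subset
    (hJ.subset.trans subset_union_right) (union_subset (hX.trans diff_subset) hC)
  have hNB := contract'_basis hC hJ hX hK hJK
  rw [← hNB.closure_eq_closure, ← hK.closure_eq_closure]
  ext x
  rw [mem_diff, hNB.indep.mem_closure_iff', hK.indep.mem_closure_iff', contract'_ground,
    mem_diff]
  constructor
  · rintro ⟨⟨hxE, hxC⟩, himp⟩
    refine ⟨⟨hxE, fun hind ↦ ?_⟩, hxC⟩
    have hxJ : x ∉ J := fun h ↦ hxC (hJ.subset h)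
    have h1 : (M.contract' C).Indep (insert x (K \ J)) := by
      rw [contract'_indep_iff hC hJ, insert_union, diff_union_of_subset hJK]
      exact ⟨insert_subset ⟨hxE, hxC⟩ (hNB.subset.trans hX), hind⟩
    exact (himp h1).1
  · rintro ⟨⟨hxE, himp⟩, hxC⟩
    refine ⟨⟨hxE, hxC⟩, fun hind ↦ ?_⟩
    rw [contract'_indep_iff hC hJ, insert_union, diff_union_of_subset hJK] at hind
    exact ⟨himp hind.2, fun hxJ ↦ hxC (hJ.subset hxJ)⟩

lemma contract'_flat_iff [M.Finite] (hC : C ⊆ M.E) (hF : F ⊆ M.E \ C) :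
    (M.contract' C).IsFlat F ↔ M.IsFlat (F ∪ C) := by
  rw [flat_iff_closure_self' (M := M.contract' C), flat_iff_closure_self',
    contract'_closure hC hF]
  constructor
  · intro h
    refine subset_antisymm (fun x hx ↦ ?_) (M.subset_closure _
      (union_subset (hF.trans diff_subset) hC))
    by_cases hxC : x ∈ C
    · exact Or.inr hxC
    · exact Or.inl (h ▸ (⟨hx, hxC⟩ : x ∈ M.closure (F ∪ C) \ C))
  · intro h
    rw [h, union_diff_right, (disjoint_sdiff_left.mono_left hF).sdiff_eq_left]

lemma restrict_eRk'_eq {M' : Matroid β} {K X : Set β} (hXK : X ⊆ K) :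
    (M' ↾ K).eRk' X = M'.eRk' X := by
  refine le_antisymm (eRk'_le_iff.2 fun I hI hIX ↦ le_eRk' hI.of_restrict hIX)
    (eRk'_le_iff.2 fun I hI hIX ↦ le_eRk' (hI.indep_restrict_of_subset (hIX.trans hXK)) hIX)

lemma restrict_closure_eq'' {M' : Matroid β} {K X : Set β} (hK : K ⊆ M'.E) (hXK : X ⊆ K) :
    (M' ↾ K).closure X = M'.closure X ∩ K := by
  obtain ⟨I, hI⟩ := (M' ↾ K).exists_isBasis X (by rwa [restrict_ground_eq])
  have hIM : M'.IsBasis I X := ((isBasis_restrict_iff hK).1 hI).1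
  rw [← hI.closure_eq_closure, ← hIM.closure_eq_closure]
  ext x
  rw [mem_inter_iff, hI.indep.mem_closure_iff', hIM.indep.mem_closure_iff', restrict_ground_eq]
  constructor
  · rintro ⟨hxK, himp⟩
    exact ⟨⟨hK hxK, fun hind ↦ himp (hind.indep_restrict_of_subset
      (insert_subset hxK (hIM.subset.trans hXK)))⟩, hxK⟩
  · rintro ⟨⟨hxE, himp⟩, hxK⟩
    exact ⟨hxK, fun hind ↦ himp hind.of_restrict⟩

lemma restrict_flat_iff' {M' : Matroid β} {K X : Set β} (hKflat : M'.IsFlat K) (hXK : X ⊆ K) :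
    (M' ↾ K).IsFlat X ↔ M'.IsFlat X := by
  rw [flat_iff_closure_self', flat_iff_closure_self',
    restrict_closure_eq'' hKflat.subset_ground hXK]
  have hclK : M'.closure X ⊆ K := by
    rw [← hKflat.closure]; exact closure_subset_closure _ hXK
  rw [inter_eq_self_of_subset_left hclK]

end AuxAdjoint

/-- If `φ` is an adjoint map from `M` to `M'` and `C ⊆ E(M)`, then `F ↦ φ (F ∪ C)` is an
adjoint map from `M ／ C` to `M' | φ(cl_M C)`. -/
theorem stmt5 (M : Matroid α) (M' : Matroid β) [M.Finite] (φ : Set α → Set β)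
    (hφ : IsAdjointMap M M' φ) (C : Set α) (hC : C ⊆ M.E) :
    IsAdjointMap (M.contract' C) (M' ↾ φ (M.closure C)) (fun F => φ (F ∪ C)) := by
  obtain ⟨hsimp, hrank, hflat, hinj, hrev, hhp, hsurj⟩ := id hφ
  have hclC : M.IsFlat (M.closure C) := M.closure_flat' C
  have hKflat : M'.IsFlat (φ (M.closure C)) := hflat _ hclC
  have hKE : φ (M.closure C) ⊆ M'.E := hKflat.subset_ground
  have rC : M.eRk' (M.closure C) = M.eRk' C := eRk'_closure_eq hC
  have hNE : (M.contract' C).E = M.E \ C := contract'_ground M C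
  have hNsub : ∀ F, (M.contract' C).IsFlat F → F ⊆ M.E \ C := fun F h ↦ hNE ▸ h.subset_ground
  have hNflat : ∀ F, (M.contract' C).IsFlat F → M.IsFlat (F ∪ C) :=
    fun F h ↦ (contract'_flat_iff hC (hNsub F h)).1 h
  have hsubK : ∀ F, (M.contract' C).IsFlat F → φ (F ∪ C) ⊆ φ (M.closure C) := by
    intro F h
    refine hrev hclC (hNflat F h) ?_
    rw [← (hNflat F h).closure]
    exact closure_subset_closure _ subset_union_right
  have hrkE : (M.contract' C).eRk' (M.E \ C) + M.eRk' C = M.eRk' M.E := by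
    rw [contract'_eRk' hC Subset.rfl, diff_union_of_subset hC]
  refine ⟨?_, ?_, ?_, ?_, ?_, ?_, ?_⟩
  · -- Simple'
    intro X hXE hcard
    rw [restrict_ground_eq] at hXE
    rw [restrict_indep_iff]
    exact ⟨hsimp X (hXE.trans hKE) hcard, hXE⟩
  · -- equal rank
    have h2b : M'.eRk' (φ (M.closure C)) + M.eRk' C = M.eRk' M.E := by
      rw [← rC]; exact adjoint_eRk'_add hφ hclC
    have hKeq : M'.eRk' (φ (M.closure C)) = (M.contract' C).eRk' (M.E \ C) :=
      WithTop.add_right_cancel eRk'_ne_top (h2b.trans hrkE.symm)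
    rw [restrict_ground_eq, restrict_eRk'_eq Subset.rfl, hNE, hKeq]
  · -- flats
    intro F hF
    exact (restrict_flat_iff' hKflat (hsubK F hF)).2 (hflat _ (hNflat F hF))
  · -- injective
    intro F₁ F₂ h1 h2 heq
    have := hinj (hNflat F₁ h1) (hNflat F₂ h2) heq
    have e1 : F₁ = (F₁ ∪ C) \ C := by
      rw [union_diff_right, (disjoint_sdiff_left.mono_left (hNsub F₁ h1)).sdiff_eq_left]
    have e2 : F₂ = (F₂ ∪ C) \ C := by
      rw [union_diff_right, (disjoint_sdiff_left.mono_left (hNsub F₂ h2)).sdiff_eq_left]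
    rw [e1, e2, this]
  · -- order-reversing
    intro F₁ F₂ h1 h2 hss
    exact hrev (hNflat F₁ h1) (hNflat F₂ h2) (union_subset_union_left C hss)
  · -- hyperplanes to points
    intro H hH
    have hHM : M.Hyperplane' (H ∪ C) := by
      refine ⟨hNflat H hH.1, ?_⟩
      calc M.eRk' (H ∪ C) + 1
          = ((M.contract' C).eRk' H + M.eRk' C) + 1 := by
            rw [contract'_eRk' hC (hNsub H hH.1)]
        _ = ((M.contract' C).eRk' H + 1) + M.eRk' C := by ring
        _ = (M.contract' C).eRk' (M.contract' C).E + M.eRk' C := by rw [hH.2]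
        _ = M.eRk' M.E := by rw [hNE]; exact hrkE
    have hpt := hhp _ hHM
    exact ⟨(restrict_flat_iff' hKflat (hsubK H hH.1)).2 hpt.1,
      by rw [restrict_eRk'_eq (hsubK H hH.1)]; exact hpt.2⟩
  · -- points to hyperplanes
    intro P hP
    have hPK : P ⊆ φ (M.closure C) := by
      have := hP.1.subset_ground; rwa [restrict_ground_eq] at this
    have hPpt : M'.Point' P := ⟨(restrict_flat_iff' hKflat hPK).1 hP.1,
      by rw [← restrict_eRk'_eq hPK]; exact hP.2⟩
    obtain ⟨H₀, hH₀, hφH₀⟩ := hsurj P hPpt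
    have hclCH : M.closure C ⊆ H₀ := reflection hφ hclC hH₀ (hφH₀ ▸ hPK)
    have hCH : C ⊆ H₀ := (M.subset_closure C hC).trans hclCH
    have hsubH : H₀ \ C ⊆ M.E \ C := diff_subset_diff_left hH₀.1.subset_ground
    refine ⟨H₀ \ C, ⟨?_, ?_⟩, ?_⟩
    · rw [contract'_flat_iff hC hsubH, diff_union_of_subset hCH]
      exact hH₀.1
    · have e1 : (M.contract' C).eRk' (H₀ \ C) + M.eRk' C = M.eRk' H₀ := by
        rw [contract'_eRk' hC hsubH, diff_union_of_subset hCH]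
      have e2 : ((M.contract' C).eRk' (H₀ \ C) + 1) + M.eRk' C
          = (M.contract' C).eRk' (M.contract' C).E + M.eRk' C := by
        calc ((M.contract' C).eRk' (H₀ \ C) + 1) + M.eRk' C
            = ((M.contract' C).eRk' (H₀ \ C) + M.eRk' C) + 1 := by ring
          _ = M.eRk' H₀ + 1 := by rw [e1]
          _ = M.eRk' M.E := hH₀.2
          _ = (M.contract' C).eRk' (M.contract' C).E + M.eRk' C := by rw [hNE]; exact hrkE.symm
      exact WithTop.add_right_cancel eRk'_ne_top e2
    · show φ ((H₀ \ C) ∪ C) = P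
      rw [diff_union_of_subset hCH, hφH₀]
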